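/- (Abstract equi-coercivity.) Let X, Y, B be real normed spaces, T : X → Y and γ : X → B continuous linear maps, and N : X → ℝ another norm on X such that ‖x‖_X = N(x) + ‖T x‖_Y for all x ∈ X. Assume: every bounded sequence in X has a weakly convergent subsequence; whenever (x_n) converges weakly to x in X, N(x_n − x) → 0; f : X → ℝ is a continuous linear functional; E : X → ℝ satisfies E(x) ≥ c₁ ‖T x‖_Y^p − c₂ for all x ∈ X, for some constants c₁ > 0, c₂ ∈ ℝ and p > 1; for every r ∈ ℝ the set {x ∈ ker(T) : ‖γ(x)‖_B² − f(x) ≤ r} is bounded in X; and for every r ∈ ℝ the sublevel set M_r := {x ∈ X : E(x) + ‖γ(x)‖_B² − f(x) ≤ r} is weakly sequentially closed and star-shaped with center 0. Then for every r ∈ ℝ the set M_r = {x ∈ X : E(x) + ‖γ(x)‖_B² − f(x) ≤ r} is bounded in X. -/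

import Mathlib

/-!
If a sublevel set `M_r` were unbounded, pick `x n ∈ M_r` with `‖x n‖ → ∞`. The lower bound on
`E` gives `c₁ ‖T (x n)‖ ^ p ≤ r + c₂ + ‖f‖ ‖x n‖`, so, as `p > 1`, the normalized vectors
`y n = ‖x n‖⁻¹ • x n` satisfy `T (y n) → 0`. A weakly convergent subsequence of `y n` then
converges strongly, because `‖·‖ = N + ‖T ·‖` and `N` turns weak into strong convergence; its
limit `y₀` is a unit vector of `ker T`. Star-shapedness and weak closedness put the whole ray
`s • y₀`, `s ≥ 0`, into `M_r`, and on `ker T` membership in `M_r` forces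
`‖γ ·‖ ^ 2 - f ≤ r + c₂`, contradicting the boundedness of that sublevel set of `ker T`.
-/

open Filter Topology

/-- A sequence `x` in a normed space weakly converges to `x₀` if `φ (x n) → φ x₀`
for every continuous linear functional `φ`. -/
def WeaklyConvergesTo {X : Type*} [NormedAddCommGroup X] [NormedSpace ℝ X]
    (x : ℕ → X) (x₀ : X) : Prop :=
  ∀ φ : X →L[ℝ] ℝ, Tendsto (fun n => φ (x n)) atTop (𝓝 (φ x₀))

theorem Real.tendsto_zero_of_rpow_tendsto_zero {α : Type*} {l : Filter α} {u : α → ℝ} {p : ℝ}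
    (hp : 0 < p) (hu : ∀ᶠ i in l, 0 ≤ u i) (hup : Tendsto (fun i => u i ^ p) l (𝓝 0)) :
    Tendsto u l (𝓝 0) := by
  have hroot := ((Real.continuousAt_rpow_const 0 p⁻¹ (Or.inr (by positivity))).tendsto).comp hup
  rw [Real.zero_rpow (inv_ne_zero hp.ne')] at hroot
  refine hroot.congr' ?_
  filter_upwards [hu] with i hi
  exact Real.rpow_rpow_inv hi hp.ne'

theorem tendsto_div_zero_of_mul_rpow_le {α : Type*} {l : Filter α} {a t : α → ℝ} {c A B p : ℝ}
    (hc : 0 < c) (hp : 1 < p) (ht : Tendsto t l atTop) (ha : ∀ i, 0 ≤ a i)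
    (hle : ∀ i, c * a i ^ p ≤ A + B * t i) :
    Tendsto (fun i => a i / t i) l (𝓝 0) := by
  have hbound : Tendsto (fun i => A / c * t i ^ (-p) + B / c * t i ^ (-(p - 1))) l (𝓝 0) := by
    have h := (((tendsto_rpow_neg_atTop (by linarith : 0 < p)).comp ht).const_mul (A / c)).add
      (((tendsto_rpow_neg_atTop (by linarith : 0 < p - 1)).comp ht).const_mul (B / c))
    rwa [mul_zero, mul_zero, add_zero] at h
  refine Real.tendsto_zero_of_rpow_tendsto_zero (by linarith) ?_ (squeeze_zero' ?_ ?_ hbound)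
  · filter_upwards [ht.eventually_gt_atTop 0] with i hi using div_nonneg (ha i) hi.le
  · filter_upwards [ht.eventually_gt_atTop 0] with i hi
      using Real.rpow_nonneg (div_nonneg (ha i) hi.le) p
  filter_upwards [ht.eventually_gt_atTop 0] with i hi
  have hap : a i ^ p ≤ (A + B * t i) / c := by rw [le_div_iff₀ hc]; linarith [hle i]
  have hsplit : t i ^ (-(p - 1)) = t i * t i ^ (-p) := by
    rw [show -(p - 1) = 1 + -p by ring, Real.rpow_add hi, Real.rpow_one]
  calc (a i / t i) ^ p = a i ^ p * t i ^ (-p) := by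
        rw [Real.div_rpow (ha i) hi.le, Real.rpow_neg hi.le, div_eq_mul_inv]
    _ ≤ (A + B * t i) / c * t i ^ (-p) := by gcongr
    _ = A / c * t i ^ (-p) + B / c * t i ^ (-(p - 1)) := by rw [hsplit]; ring

theorem exists_seq_mem_tendsto_norm_atTop {X : Type*} [SeminormedAddCommGroup X] {S : Set X}
    (hS : ¬Bornology.IsBounded S) :
    ∃ x : ℕ → X, (∀ n, x n ∈ S) ∧ Tendsto (fun n => ‖x n‖) atTop atTop := by
  simp only [isBounded_iff_forall_norm_le, not_exists, not_forall, not_le] at hS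
  choose x hxS hlt using fun n : ℕ => hS n
  exact ⟨x, hxS, tendsto_atTop_mono (fun n => (hlt n).le) tendsto_natCast_atTop_atTop⟩

theorem not_isBounded_of_forall_smul_mem {E : Type*} [NormedAddCommGroup E] [NormedSpace ℝ E]
    {S : Set E} {y : E} (hy : y ≠ 0) (hS : ∀ s : ℝ, 0 ≤ s → s • y ∈ S) :
    ¬Bornology.IsBounded S := by
  intro hb
  obtain ⟨C, hC⟩ := isBounded_iff_forall_norm_le.1 hb
  have hCy := hC _ (hS ((|C| + 1) / ‖y‖) (by positivity))
  rw [norm_smul, Real.norm_of_nonneg (by positivity),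
    div_mul_cancel₀ _ (norm_ne_zero_iff.2 hy)] at hCy
  linarith [le_abs_self C]

section

variable {X Y : Type*} [NormedAddCommGroup X] [NormedSpace ℝ X]
  [NormedAddCommGroup Y] [NormedSpace ℝ Y]

def IsWeaklySeqClosed (M : Set X) : Prop :=
  ∀ (x : ℕ → X) (x₀ : X), (∀ n, x n ∈ M) → WeaklyConvergesTo x x₀ → x₀ ∈ M

namespace WeaklyConvergesTo

variable {x : ℕ → X} {x₀ : X}

theorem comp_tendsto (h : WeaklyConvergesTo x x₀) {φ : ℕ → ℕ} (hφ : Tendsto φ atTop atTop) :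
    WeaklyConvergesTo (x ∘ φ) x₀ :=
  fun ψ => (h ψ).comp hφ

theorem const_smul (h : WeaklyConvergesTo x x₀) (c : ℝ) :
    WeaklyConvergesTo (fun n => c • x n) (c • x₀) :=
  fun ψ => by simpa using (h ψ).const_mul c

theorem map (h : WeaklyConvergesTo x x₀) (L : X →L[ℝ] Y) :
    WeaklyConvergesTo (fun n => L (x n)) (L x₀) :=
  fun ψ => h (ψ.comp L)

theorem eq_of_tendsto (h : WeaklyConvergesTo x x₀) {a : X} (ha : Tendsto x atTop (𝓝 a)) :
    x₀ = a :=
  (SeparatingDual.eq_iff_forall_dual_eq (R := ℝ)).2 fun ψ =>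
    tendsto_nhds_unique (h ψ) ((ψ.continuous.tendsto a).comp ha)

end WeaklyConvergesTo

theorem IsWeaklySeqClosed.smul_mem_of_weaklyConvergesTo_inv_smul {M : Set X}
    (hM : IsWeaklySeqClosed M) (hstar : StarConvex ℝ 0 M) {x : ℕ → X} {t : ℕ → ℝ} {y₀ : X}
    (hx : ∀ n, x n ∈ M) (ht : Tendsto t atTop atTop)
    (hw : WeaklyConvergesTo (fun n => (t n)⁻¹ • x n) y₀) {s : ℝ} (hs : 0 ≤ s) :
    s • y₀ ∈ M := by
  obtain ⟨K, hK⟩ := eventually_atTop.1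
    ((ht.eventually_gt_atTop 0).and (ht.eventually_ge_atTop s))
  refine hM (fun n => (s / t (n + K)) • x (n + K)) _ (fun n => ?_) ?_
  · obtain ⟨hpos, hge⟩ := hK (n + K) (Nat.le_add_left K n)
    exact starConvex_zero_iff.1 hstar (hx _) (div_nonneg hs hpos.le)
      (div_le_one_of_le₀ hge hpos.le)
  · simpa [Function.comp_def, smul_smul, div_eq_mul_inv] using
      (hw.comp_tendsto (tendsto_add_atTop_nat K)).const_smul s

theorem tendsto_of_tendsto_sub_of_tendsto_apply (T : X →L[ℝ] Y) (N : X → ℝ)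
    (hnorm : ∀ x : X, ‖x‖ = N x + ‖T x‖) {y : ℕ → X} {y₀ : X}
    (hN : Tendsto (fun n => N (y n - y₀)) atTop (𝓝 0))
    (hT : Tendsto (fun n => T (y n)) atTop (𝓝 (T y₀))) :
    Tendsto y atTop (𝓝 y₀) := by
  rw [tendsto_iff_norm_sub_tendsto_zero] at hT ⊢
  simpa [hnorm, map_sub] using hN.add hT

end

theorem exists_strictMono_normalize_weaklyConvergesTo_unit_mem_ker
    {X Y : Type*} [NormedAddCommGroup X] [NormedSpace ℝ X]
    [NormedAddCommGroup Y] [NormedSpace ℝ Y] (T : X →L[ℝ] Y) (N : X → ℝ)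
    (hnorm : ∀ x : X, ‖x‖ = N x + ‖T x‖)
    (hcompact : ∀ x : ℕ → X, Bornology.IsBounded (Set.range x) →
      ∃ (φ : ℕ → ℕ) (x₀ : X), StrictMono φ ∧ WeaklyConvergesTo (x ∘ φ) x₀)
    (hNweak : ∀ (x : ℕ → X) (x₀ : X), WeaklyConvergesTo x x₀ →
      Tendsto (fun n => N (x n - x₀)) atTop (𝓝 0))
    {x : ℕ → X} (hx : Tendsto (fun n => ‖x n‖) atTop atTop)
    (hTx : Tendsto (fun n => ‖T (x n)‖ / ‖x n‖) atTop (𝓝 0)) :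
    ∃ (φ : ℕ → ℕ) (y₀ : X), StrictMono φ ∧
      WeaklyConvergesTo (fun n => ‖x (φ n)‖⁻¹ • x (φ n)) y₀ ∧ T y₀ = 0 ∧ ‖y₀‖ = 1 := by
  set y : ℕ → X := fun n => ‖x n‖⁻¹ • x n
  have hy_le : ∀ n, ‖y n‖ ≤ 1 := fun n => by
    simpa [y, norm_smul] using inv_mul_le_one_of_le₀ le_rfl (norm_nonneg (x n))
  obtain ⟨φ, y₀, hφ, hw⟩ :=
    hcompact y (isBounded_iff_forall_norm_le.2 ⟨1, by rintro _ ⟨n, rfl⟩; exact hy_le n⟩)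
  have hTy : Tendsto (fun n => T (y (φ n))) atTop (𝓝 0) := by
    rw [tendsto_zero_iff_norm_tendsto_zero]
    simpa [y, norm_smul, div_eq_inv_mul, Function.comp_def] using hTx.comp hφ.tendsto_atTop
  have hTy₀ : T y₀ = 0 := (hw.map T).eq_of_tendsto hTy
  -- `N` turns weak convergence into strong convergence; `T` contributes nothing in the limit.
  have hyy₀ : Tendsto (y ∘ φ) atTop (𝓝 y₀) :=
    tendsto_of_tendsto_sub_of_tendsto_apply T N hnorm (hNweak _ _ hw) (by rwa [hTy₀])
  refine ⟨φ, y₀, hφ, hw, hTy₀, tendsto_nhds_unique hyy₀.norm (tendsto_const_nhds.congr' ?_)⟩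
  filter_upwards [(hx.comp hφ.tendsto_atTop).eventually_gt_atTop 0] with n hn
  exact (norm_smul_inv_norm (norm_pos_iff.1 hn)).symm

theorem abstract_equicoercivity_general
    {X Y B : Type*} [NormedAddCommGroup X] [NormedSpace ℝ X]
    [NormedAddCommGroup Y] [NormedSpace ℝ Y]
    [NormedAddCommGroup B] [NormedSpace ℝ B]
    (T : X →L[ℝ] Y) (γ : X →L[ℝ] B) (N : X → ℝ)
    (hnorm : ∀ x : X, ‖x‖ = N x + ‖T x‖)
    (hcompact : ∀ x : ℕ → X, Bornology.IsBounded (Set.range x) →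
      ∃ (φ : ℕ → ℕ) (x₀ : X), StrictMono φ ∧ WeaklyConvergesTo (x ∘ φ) x₀)
    (hNweak : ∀ (x : ℕ → X) (x₀ : X), WeaklyConvergesTo x x₀ →
      Tendsto (fun n => N (x n - x₀)) atTop (𝓝 0))
    (f : X →L[ℝ] ℝ) (E : X → ℝ)
    (c₁ c₂ p : ℝ) (hc₁ : 0 < c₁) (hp : 1 < p)
    (hE : ∀ x : X, c₁ * ‖T x‖ ^ p - c₂ ≤ E x)
    (hker : ∀ r : ℝ, Bornology.IsBounded {x : X | T x = 0 ∧ ‖γ x‖ ^ 2 - f x ≤ r})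
    (hMclosed : ∀ r : ℝ, ∀ (x : ℕ → X) (x₀ : X),
      (∀ n, x n ∈ {z : X | E z + ‖γ z‖ ^ 2 - f z ≤ r}) → WeaklyConvergesTo x x₀ →
        x₀ ∈ {z : X | E z + ‖γ z‖ ^ 2 - f z ≤ r})
    (hMstar : ∀ r : ℝ, ∀ x ∈ {z : X | E z + ‖γ z‖ ^ 2 - f z ≤ r},
      ∀ t : ℝ, t ∈ Set.Icc (0 : ℝ) 1 → t • x ∈ {z : X | E z + ‖γ z‖ ^ 2 - f z ≤ r}) :
    ∀ r : ℝ, Bornology.IsBounded {x : X | E x + ‖γ x‖ ^ 2 - f x ≤ r} := by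
  intro r
  by_contra hM
  obtain ⟨x, hxM, hx⟩ := exists_seq_mem_tendsto_norm_atTop hM
  have hTx : ∀ n, c₁ * ‖T (x n)‖ ^ p ≤ r + c₂ + ‖f‖ * ‖x n‖ := fun n => by
    have hxn : E (x n) + ‖γ (x n)‖ ^ 2 - f (x n) ≤ r := hxM n
    linarith [hE (x n), sq_nonneg ‖γ (x n)‖, (le_abs_self _).trans (f.le_opNorm (x n))]
  obtain ⟨φ, y₀, hφ, hw, hTy₀, hy₀⟩ :=
    exists_strictMono_normalize_weaklyConvergesTo_unit_mem_ker T N hnorm hcompact hNweak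
      hx (tendsto_div_zero_of_mul_rpow_le hc₁ hp hx (fun n => norm_nonneg _) hTx)
  have hray : ∀ s : ℝ, 0 ≤ s → s • y₀ ∈ {x : X | T x = 0 ∧ ‖γ x‖ ^ 2 - f x ≤ r + c₂} := by
    intro s hs
    have hsM : E (s • y₀) + ‖γ (s • y₀)‖ ^ 2 - f (s • y₀) ≤ r :=
      IsWeaklySeqClosed.smul_mem_of_weaklyConvergesTo_inv_smul (hMclosed r)
        (starConvex_zero_iff.2 fun z hz a ha₀ ha₁ => hMstar r z hz a ⟨ha₀, ha₁⟩)
        (fun n => hxM (φ n)) (hx.comp hφ.tendsto_atTop) hw (s := s) hs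
    have hTs : T (s • y₀) = 0 := by rw [map_smul, hTy₀, smul_zero]
    have hEs := hE (s • y₀)
    rw [hTs, norm_zero, Real.zero_rpow (by linarith), mul_zero, zero_sub] at hEs
    exact ⟨hTs, by linarith⟩
  exact not_isBounded_of_forall_smul_mem (norm_pos_iff.1 (hy₀ ▸ one_pos)) hray (hker (r + c₂))

theorem abstract_equicoercivity
    {X Y B : Type*} [NormedAddCommGroup X] [NormedSpace ℝ X]
    [NormedAddCommGroup Y] [NormedSpace ℝ Y]
    [NormedAddCommGroup B] [NormedSpace ℝ B]
    (T : X →L[ℝ] Y) (γ : X →L[ℝ] B) (N : X → ℝ)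
    (hN0 : ∀ x : X, 0 ≤ N x)
    (hNeq : ∀ x : X, N x = 0 ↔ x = 0)
    (hNadd : ∀ x y : X, N (x + y) ≤ N x + N y)
    (hNsmul : ∀ (c : ℝ) (x : X), N (c • x) = |c| * N x)
    (hnorm : ∀ x : X, ‖x‖ = N x + ‖T x‖)
    (hcompact : ∀ x : ℕ → X, Bornology.IsBounded (Set.range x) →
      ∃ (φ : ℕ → ℕ) (x₀ : X), StrictMono φ ∧ WeaklyConvergesTo (x ∘ φ) x₀)
    (hNweak : ∀ (x : ℕ → X) (x₀ : X), WeaklyConvergesTo x x₀ →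
      Tendsto (fun n => N (x n - x₀)) atTop (𝓝 0))
    (f : X →L[ℝ] ℝ) (E : X → ℝ)
    (c₁ c₂ p : ℝ) (hc₁ : 0 < c₁) (hp : 1 < p)
    (hE : ∀ x : X, c₁ * ‖T x‖ ^ p - c₂ ≤ E x)
    (hker : ∀ r : ℝ, Bornology.IsBounded {x : X | T x = 0 ∧ ‖γ x‖ ^ 2 - f x ≤ r})
    (hMclosed : ∀ r : ℝ, ∀ (x : ℕ → X) (x₀ : X),
      (∀ n, x n ∈ {z : X | E z + ‖γ z‖ ^ 2 - f z ≤ r}) → WeaklyConvergesTo x x₀ →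
        x₀ ∈ {z : X | E z + ‖γ z‖ ^ 2 - f z ≤ r})
    (hMstar : ∀ r : ℝ, ∀ x ∈ {z : X | E z + ‖γ z‖ ^ 2 - f z ≤ r},
      ∀ t : ℝ, t ∈ Set.Icc (0 : ℝ) 1 → t • x ∈ {z : X | E z + ‖γ z‖ ^ 2 - f z ≤ r}) :
    ∀ r : ℝ, Bornology.IsBounded {x : X | E x + ‖γ x‖ ^ 2 - f x ≤ r} :=
  abstract_equicoercivity_general T γ N hnorm hcompact hNweak f E c₁ c₂ p hc₁ hp hE hker hMclosed
    hMstar
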